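/- There exists a unique λ_cr > 0 satisfying 2·log((2 + √(λ_cr² + 4))/λ_cr) − √(λ_cr² + 4) = 0, and λ_cr ∈ (1.32, 1.33). -/
import Mathlib


open Real

private lemma exp12_pow : Real.exp 1.2 ^ 5 = Real.exp 1 ^ 6 := by
  rw [← Real.exp_nat_mul, ← Real.exp_nat_mul]; norm_num

private lemma exp12_lt : Real.exp 1.2 < 3.3304 := by
  have h1 : Real.exp 1 < 2.7182818286 := Real.exp_one_lt_d9
  have h0 : (0:ℝ) ≤ Real.exp 1 := (Real.exp_pos 1).le
  have h2 : Real.exp 1 ^ 6 < 2.7182818286 ^ 6 := by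
    exact pow_lt_pow_left₀ h1 h0 (by norm_num)
  have h3 : (2.7182818286:ℝ) ^ 6 < 3.3304 ^ 5 := by norm_num
  have h4 : Real.exp 1.2 ^ 5 < 3.3304 ^ 5 := by
    rw [exp12_pow]; linarith
  exact lt_of_pow_lt_pow_left₀ 5 (by norm_num) h4

private lemma exp12_gt : (3.3097:ℝ) < Real.exp 1.2 := by
  have h1 : (2.7182818283:ℝ) < Real.exp 1 := Real.exp_one_gt_d9
  have h2 : (2.7182818283:ℝ) ^ 6 < Real.exp 1 ^ 6 :=
    pow_lt_pow_left₀ h1 (by norm_num) (by norm_num)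
  have h3 : (3.3097:ℝ) ^ 5 < 2.7182818283 ^ 6 := by norm_num
  have h4 : (3.3097:ℝ) ^ 5 < Real.exp 1.2 ^ 5 := by
    rw [exp12_pow]; linarith
  exact lt_of_pow_lt_pow_left₀ 5 (Real.exp_pos 1.2).le h4

/-- F is strictly decreasing on positive reals. -/
private lemma F_anti {a b : ℝ} (ha : 0 < a) (hab : a < b) :
    2 * Real.log ((2 + Real.sqrt (b ^ 2 + 4)) / b) - Real.sqrt (b ^ 2 + 4) <
    2 * Real.log ((2 + Real.sqrt (a ^ 2 + 4)) / a) - Real.sqrt (a ^ 2 + 4) := by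
  have hb : 0 < b := ha.trans hab
  set sa := Real.sqrt (a ^ 2 + 4) with hsa
  set sb := Real.sqrt (b ^ 2 + 4) with hsb
  have hsa0 : 0 < sa := Real.sqrt_pos.mpr (by positivity)
  have hsb0 : 0 < sb := Real.sqrt_pos.mpr (by positivity)
  have hsa2 : sa ^ 2 = a ^ 2 + 4 := Real.sq_sqrt (by positivity)
  have hsb2 : sb ^ 2 = b ^ 2 + 4 := Real.sq_sqrt (by positivity)
  have hslt : sa < sb := by
    apply Real.sqrt_lt_sqrt (by positivity)
    nlinarith
  -- a * sb < b * sa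
  have hkey : a * sb < b * sa := by
    nlinarith [mul_pos ha hsb0, mul_pos hb hsa0, sq_nonneg (a * sb - b * sa),
      sq_nonneg (a * sb + b * sa)]
  have harg : (2 + sb) / b < (2 + sa) / a := by
    rw [div_lt_div_iff₀ hb ha]
    nlinarith
  have hlog : Real.log ((2 + sb) / b) < Real.log ((2 + sa) / a) :=
    Real.log_lt_log (by positivity) harg
  linarith

/-- There exists a unique `λ_cr > 0` satisfying
`2·log((2 + √(λ_cr² + 4))/λ_cr) − √(λ_cr² + 4) = 0`, and `λ_cr ∈ (1.32, 1.33)`. -/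
theorem stmt_0 :
    ∃ lcr : ℝ, (0 < lcr ∧ 2 * Real.log ((2 + Real.sqrt (lcr ^ 2 + 4)) / lcr)
        - Real.sqrt (lcr ^ 2 + 4) = 0 ∧ (1.32 : ℝ) < lcr ∧ lcr < 1.33) ∧
      ∀ l : ℝ, 0 < l →
        2 * Real.log ((2 + Real.sqrt (l ^ 2 + 4)) / l) - Real.sqrt (l ^ 2 + 4) = 0 →
        l = lcr := by
  set F : ℝ → ℝ := fun l => 2 * Real.log ((2 + Real.sqrt (l ^ 2 + 4)) / l)
      - Real.sqrt (l ^ 2 + 4) with hF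
  -- F(1.32) > 0
  have hpos : 0 < F 1.32 := by
    have hs2 : Real.sqrt ((1.32:ℝ) ^ 2 + 4) ^ 2 = 5.7424 := by
      rw [Real.sq_sqrt (by norm_num)]; norm_num
    set s := Real.sqrt ((1.32:ℝ) ^ 2 + 4) with hs
    have hs0 : 0 < s := Real.sqrt_pos.mpr (by norm_num)
    have hsu : s ≤ 2.4 := by nlinarith
    have hsl : 2.3962 ≤ s := by nlinarith
    have hlog : s / 2 < Real.log ((2 + s) / 1.32) := by
      rw [Real.lt_log_iff_exp_lt (by positivity)]
      have h1 : Real.exp (s / 2) ≤ Real.exp 1.2 := Real.exp_le_exp.mpr (by linarith)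
      have h2 : Real.exp 1.2 < 3.3304 := exp12_lt
      have h3 : (3.3304:ℝ) ≤ (2 + s) / 1.32 := by
        rw [le_div_iff₀ (by norm_num)]; nlinarith
      linarith
    simp only [hF]
    rw [← hs]
    linarith
  -- F(1.33) < 0
  have hneg : F 1.33 < 0 := by
    have hs2 : Real.sqrt ((1.33:ℝ) ^ 2 + 4) ^ 2 = 5.7689 := by
      rw [Real.sq_sqrt (by norm_num)]; norm_num
    set s := Real.sqrt ((1.33:ℝ) ^ 2 + 4) with hs
    have hs0 : 0 < s := Real.sqrt_pos.mpr (by norm_num)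
    have hsl : 2.4 ≤ s := by nlinarith
    have hsu : s ≤ 2.40186 := by nlinarith
    have hlog : Real.log ((2 + s) / 1.33) < s / 2 := by
      rw [Real.log_lt_iff_lt_exp (by positivity)]
      have h1 : Real.exp 1.2 ≤ Real.exp (s / 2) := Real.exp_le_exp.mpr (by linarith)
      have h2 : (3.3097:ℝ) < Real.exp 1.2 := exp12_gt
      have h3 : (2 + s) / 1.33 ≤ 3.3097 := by
        rw [div_le_iff₀ (by norm_num)]; nlinarith
      linarith
    simp only [hF]
    rw [← hs]
    linarith
  -- continuity of F on [1.32, 1.33]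
  have hcont : ContinuousOn F (Set.Icc 1.32 1.33) := by
    have hsq : Continuous fun l : ℝ => Real.sqrt (l ^ 2 + 4) :=
      Real.continuous_sqrt.comp (by continuity)
    apply ContinuousOn.sub _ hsq.continuousOn
    apply ContinuousOn.mul continuousOn_const
    apply ContinuousOn.log
    · exact ContinuousOn.div ((continuous_const.add hsq).continuousOn)
        continuousOn_id (fun x hx => by
          have : (1.32:ℝ) ≤ x := hx.1
          positivity)
    · intro x hx
      have hx0 : (0:ℝ) < x := lt_of_lt_of_le (by norm_num) hx.1
      have : 0 < (2 + Real.sqrt (x ^ 2 + 4)) / x := by positivity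
      exact ne_of_gt this
  -- IVT (decreasing version)
  have hmem : (0:ℝ) ∈ Set.Ioo (F 1.33) (F 1.32) := ⟨hneg, hpos⟩
  obtain ⟨lcr, hlcr, hFlcr⟩ :=
    intermediate_value_Ioo' (by norm_num : (1.32:ℝ) ≤ 1.33) hcont hmem
  have hlcr0 : 0 < lcr := lt_trans (by norm_num) hlcr.1
  refine ⟨lcr, ⟨hlcr0, hFlcr, hlcr.1, hlcr.2⟩, ?_⟩
  intro l hl hFl
  rcases lt_trichotomy l lcr with h | h | h
  · exfalso
    have := F_anti hl h
    simp only [hF] at hFlcr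
    rw [hFl, hFlcr] at this
    exact lt_irrefl 0 this
  · exact h
  · exfalso
    have := F_anti hlcr0 h
    simp only [hF] at hFlcr
    rw [hFl, hFlcr] at this
    exact lt_irrefl 0 this
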